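/- arXiv:2508.19054 — 3 statements merged into one kernel-verified Lean document; each statement's English description precedes it below -/
import Mathlib

section
/- Under Condition 1, for every mode i ∈ 𝕄 the matrix 𝓡_i(P̲) − P̲ is positive semi-definite; that is, one application of the Riccati operator of any mode does not decrease the terminal cost matrix P̲ in the semi-definite order. -/
/-! 𝓡ᵢ(P̲) − P̲ is the Schur complement of the block `Rᵢ + BᵢᵀP̲Bᵢ` in the Condition 1 matrix.
That block is positive definite because `Rᵢ ≻ 0` and `P̲ ⪰ 0`, and the Schur complement of a
positive definite block in a positive semidefinite matrix is positive semidefinite. -/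

open Matrix Filter
open scoped ENNReal

/-- Data of a switched linear-quadratic problem with `M` modes,
state dimension `n` and continuous-input dimension `m`. -/
structure SwitchedLQR (n m M : ℕ) where
  A : Fin M → Matrix (Fin n) (Fin n) ℝ
  B : Fin M → Matrix (Fin n) (Fin m) ℝ
  Q : Fin M → Matrix (Fin n) (Fin n) ℝ
  R : Fin M → Matrix (Fin m) (Fin m) ℝ

namespace SwitchedLQR

variable {n m M : ℕ}

/-- Stage cost `ℓ(x,u,i) = xᵀQᵢx + uᵀRᵢu`. -/
def ell (S : SwitchedLQR n m M) (x : Fin n → ℝ) (u : Fin m → ℝ) (i : Fin M) : ℝ :=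
  x ⬝ᵥ ((S.Q i) *ᵥ x) + u ⬝ᵥ ((S.R i) *ᵥ u)

/-- Riccati operator `𝓡ᵢ(P)`. -/
noncomputable def Ric (S : SwitchedLQR n m M) (i : Fin M)
    (P : Matrix (Fin n) (Fin n) ℝ) : Matrix (Fin n) (Fin n) ℝ :=
  S.Q i + (S.A i)ᵀ * P * S.A i -
    (S.A i)ᵀ * P * S.B i * (S.R i + (S.B i)ᵀ * P * S.B i)⁻¹ * ((S.B i)ᵀ * P * S.A i)

/-- `P_𝐢 = 𝓡_{i₀}(𝓡_{i₁}(⋯𝓡_{i_{d-1}}(P̲)⋯))` for a finite mode sequence `𝐢`. -/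
noncomputable def Pseq (S : SwitchedLQR n m M) (Pund : Matrix (Fin n) (Fin n) ℝ)
    (l : List (Fin M)) : Matrix (Fin n) (Fin n) ℝ :=
  l.foldr S.Ric Pund

/-- Solution `φ(k,x,u,i)` of the switched linear system. -/
def phi (S : SwitchedLQR n m M) (x : Fin n → ℝ) (u : ℕ → Fin m → ℝ) (is : ℕ → Fin M) :
    ℕ → Fin n → ℝ
  | 0 => x
  | k + 1 => S.A (is k) *ᵥ (phi S x u is k) + S.B (is k) *ᵥ (u k)

/-- Finite-horizon cost `J_d` with terminal cost matrix `P̲`. -/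
noncomputable def Jd (S : SwitchedLQR n m M) (Pund : Matrix (Fin n) (Fin n) ℝ) (d : ℕ)
    (x : Fin n → ℝ) (u : ℕ → Fin m → ℝ) (is : ℕ → Fin M) : ℝ :=
  (∑ k ∈ Finset.range d, S.ell (S.phi x u is k) (u k) (is k)) +
    (S.phi x u is d) ⬝ᵥ (Pund *ᵥ (S.phi x u is d))

/-- Infinite-horizon cost `J(x,u,i) ∈ [0,∞]`. -/
noncomputable def Jinf (S : SwitchedLQR n m M) (x : Fin n → ℝ) (u : ℕ → Fin m → ℝ)
    (is : ℕ → Fin M) : ℝ≥0∞ :=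
  ∑' k : ℕ, ENNReal.ofReal (S.ell (S.phi x u is k) (u k) (is k))

/-- Optimal value function `V*(x)`. -/
noncomputable def Vstar (S : SwitchedLQR n m M) (x : Fin n → ℝ) : ℝ≥0∞ :=
  ⨅ (u : ℕ → Fin m → ℝ) (is : ℕ → Fin M), S.Jinf x u is

/-- `V*_d(x)`: minimum over length-`d` mode sequences `𝐢` of `xᵀP_𝐢x`. -/
noncomputable def Vd (S : SwitchedLQR n m M) (Pund : Matrix (Fin n) (Fin n) ℝ) (d : ℕ)
    (x : Fin n → ℝ) : ℝ :=
  sInf {r : ℝ | ∃ l : List (Fin M), l.length = d ∧ r = x ⬝ᵥ ((S.Pseq Pund l) *ᵥ x)}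

/-- Condition 1: the LMI block matrix is positive semi-definite for every mode. -/
def Cond1 (S : SwitchedLQR n m M) (Pund : Matrix (Fin n) (Fin n) ℝ) : Prop :=
  ∀ i : Fin M,
    (Matrix.fromBlocks
      ((S.A i)ᵀ * Pund * S.A i - Pund + S.Q i) ((S.A i)ᵀ * Pund * S.B i)
      ((S.B i)ᵀ * Pund * S.A i) (S.R i + (S.B i)ᵀ * Pund * S.B i)).PosSemidef

/-- Assumption SA1. -/
def SA1 (S : SwitchedLQR n m M) (Pbar : Matrix (Fin n) (Fin n) ℝ) : Prop :=
  Pbar.PosDef ∧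
    ∀ x : Fin n → ℝ, ∃ (u : ℕ → Fin m → ℝ) (is : ℕ → Fin M),
      S.Jinf x u is = S.Vstar x ∧ S.Vstar x ≤ ENNReal.ofReal (x ⬝ᵥ (Pbar *ᵥ x))

/-- `H*_d(x)`. -/
noncomputable def HStar (S : SwitchedLQR n m M) (Pund : Matrix (Fin n) (Fin n) ℝ) (d : ℕ)
    (x : Fin n → ℝ) : Set ((Fin m → ℝ) × Fin M) :=
  {p | S.Vd Pund d x =
        S.ell x p.1 p.2 + S.Vd Pund (d - 1) (S.A p.2 *ᵥ x + S.B p.2 *ᵥ p.1)}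

/-- `F_d(x)`. -/
noncomputable def Fd (S : SwitchedLQR n m M) (Pund : Matrix (Fin n) (Fin n) ℝ) (d : ℕ)
    (x : Fin n → ℝ) : Set (Fin n → ℝ) :=
  {y | ∃ p ∈ S.HStar Pund d x, y = S.A p.2 *ᵥ x + S.B p.2 *ᵥ p.1}

end SwitchedLQR

namespace Matrix

variable {ι κ ν : Type*} [Fintype ι]

theorem conjTranspose_transpose_mul_mul_of_isHermitian {P : Matrix ι ι ℝ} (hP : P.IsHermitian)
    (A : Matrix ι κ ℝ) (B : Matrix ι ν ℝ) : (Aᵀ * P * B)ᴴ = Bᵀ * P * A := by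
  rw [conjTranspose_mul, conjTranspose_mul, hP.eq, Matrix.mul_assoc]
  simp

theorem PosDef.add_transpose_mul_mul [Fintype κ] {R : Matrix κ κ ℝ} (hR : R.PosDef)
    {P : Matrix ι ι ℝ} (hP : P.PosSemidef) (B : Matrix ι κ ℝ) : (R + Bᵀ * P * B).PosDef :=
  hR.add_posSemidef (hP.mul_mul_conjTranspose_same Bᵀ)

end Matrix

namespace SwitchedLQR

variable {n m M : ℕ} (S : SwitchedLQR n m M)

theorem ric_sub_self_eq (i : Fin M) (P : Matrix (Fin n) (Fin n) ℝ) :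
    S.Ric i P - P = ((S.A i)ᵀ * P * S.A i - P + S.Q i) -
      (S.A i)ᵀ * P * S.B i * (S.R i + (S.B i)ᵀ * P * S.B i)⁻¹ * ((S.B i)ᵀ * P * S.A i) := by
  unfold Ric
  abel

theorem ric_sub_self_posSemidef (i : Fin M) (hR : (S.R i).PosDef) {P : Matrix (Fin n) (Fin n) ℝ}
    (hP : P.PosSemidef)
    (hC : (fromBlocks ((S.A i)ᵀ * P * S.A i - P + S.Q i) ((S.A i)ᵀ * P * S.B i)
      ((S.B i)ᵀ * P * S.A i) (S.R i + (S.B i)ᵀ * P * S.B i)).PosSemidef) :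
    (S.Ric i P - P).PosSemidef := by
  have hD := hR.add_transpose_mul_mul hP (S.B i)
  have : Invertible (S.R i + (S.B i)ᵀ * P * S.B i) := hD.isUnit.invertible
  have hBA := conjTranspose_transpose_mul_mul_of_isHermitian hP.isHermitian (S.A i) (S.B i)
  rw [← hBA] at hC
  rw [ric_sub_self_eq, ← hBA]
  exact (PosDef.fromBlocks₂₂ _ _ hD).mp hC

end SwitchedLQR

theorem stmt5_general {n m M : ℕ}
    (S : SwitchedLQR n m M)
    (hR : ∀ i : Fin M, (S.R i).PosDef)
    (Pund : Matrix (Fin n) (Fin n) ℝ) (hPund : Pund.PosSemidef)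
    (hC : S.Cond1 Pund) :
    ∀ i : Fin M, (S.Ric i Pund - Pund).PosSemidef :=
  fun i => S.ric_sub_self_posSemidef i (hR i) hPund (hC i)

/-- under Condition 1, for every mode `i`, `𝓡ᵢ(P̲) - P̲` is positive
semi-definite. -/
theorem stmt5 {n m M : ℕ} (hn : 0 < n) (hm : 0 < m) (hM : 0 < M)
    (S : SwitchedLQR n m M)
    (hQ : ∀ i : Fin M, (S.Q i).PosDef) (hR : ∀ i : Fin M, (S.R i).PosDef)
    (Pund : Matrix (Fin n) (Fin n) ℝ) (hPund : Pund.PosSemidef)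
    (hC : S.Cond1 Pund) :
    ∀ i : Fin M, (S.Ric i Pund - Pund).PosSemidef :=
  stmt5_general S hR Pund hPund hC
end

section
/- (Proposition 2, monotonicity under extension.) Under Condition 1, for every d ∈ ℕ, every x ∈ ℝⁿ, every length-d mode sequence 𝐢 and every j ∈ 𝕄, xᵀP_𝐢x ≤ xᵀP_{𝐢⊕j}x, where 𝐢⊕j denotes the length-(d+1) sequence obtained by appending j at the end of 𝐢. Equivalently, V°_d(x,𝐢) ≤ V°_{d+1}(x,𝐢⊕j). -/
open Matrix Filter
open scoped ENNReal

/-!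
`𝓡ᵢ(P)` is the Schur complement of the lower-right block in the matrix of the one-step cost
`xᵀQᵢx + uᵀRᵢu + (Aᵢx + Bᵢu)ᵀP(Aᵢx + Bᵢu)`, so `xᵀ𝓡ᵢ(P)x` is the minimum of that cost over `u`.
As the cost block grows with `P` in the Loewner order, so does `𝓡ᵢ(P)`, on positive semidefinite
`P`; and `𝓡ᵢ(P) ≥ 𝓡ᵢ(0) = Qᵢ ≥ 0`. Condition 1 says precisely that the Schur complement
`𝓡ⱼ(P̲) - P̲` of its block matrix is positive semidefinite, i.e. `P̲ ≤ 𝓡ⱼ(P̲)`. Applying the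
monotone maps `𝓡_{i₀} ∘ ⋯ ∘ 𝓡_{i_{d-1}}` to this inequality gives `P_𝐢 ≤ P_{𝐢⊕j}`.
-/

open scoped MatrixOrder ComplexOrder

namespace Matrix

variable {𝕜 ι κ : Type*} [RCLike 𝕜] [Fintype ι] [Fintype κ] [DecidableEq κ]

theorem schur_complement₂₂_le_of_fromBlocks_le {A A' : Matrix ι ι 𝕜} {B B' : Matrix ι κ 𝕜}
    {D D' : Matrix κ κ 𝕜} (hD : D.PosDef) (hD' : D'.PosDef)
    (h : fromBlocks A B Bᴴ D ≤ fromBlocks A' B' B'ᴴ D') :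
    A - B * D⁻¹ * Bᴴ ≤ A' - B' * D'⁻¹ * B'ᴴ := by
  have := hD.isUnit.invertible
  have := hD'.isUnit.invertible
  have hA : (A' - A).IsHermitian := by
    have := h.isHermitian
    rw [sub_eq_add_neg, fromBlocks_neg, fromBlocks_add, isHermitian_fromBlocks_iff] at this
    simpa only [sub_eq_add_neg] using this.1
  have hherm : (A' - B' * D'⁻¹ * B'ᴴ - (A - B * D⁻¹ * Bᴴ)).IsHermitian := by
    rw [sub_sub_sub_comm]
    exact hA.sub ((isHermitian_mul_mul_conjTranspose B' hD'.isHermitian.inv).sub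
      (isHermitian_mul_mul_conjTranspose B hD.isHermitian.inv))
  refine .of_dotProduct_mulVec_nonneg hherm fun x => ?_
  -- `y` minimises the larger quadratic form in its second argument
  set y := -((D'⁻¹ * B'ᴴ) *ᵥ x)
  have hG : star (x ⊕ᵥ y) ᵥ* fromBlocks A B Bᴴ D ⬝ᵥ (x ⊕ᵥ y) ≤
      star (x ⊕ᵥ y) ᵥ* fromBlocks A' B' B'ᴴ D' ⬝ᵥ (x ⊕ᵥ y) := by
    have := h.dotProduct_mulVec_nonneg (x ⊕ᵥ y)
    rwa [sub_mulVec, dotProduct_sub, sub_nonneg, dotProduct_mulVec, dotProduct_mulVec] at this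
  have hD0 := hD.posSemidef.dotProduct_mulVec_nonneg ((D⁻¹ * Bᴴ) *ᵥ x + y)
  rw [schur_complement_eq₂₂ _ _ _ _ hD.isHermitian, schur_complement_eq₂₂ _ _ _ _ hD'.isHermitian,
    add_neg_cancel, dotProduct_zero, zero_add] at hG
  rw [sub_mulVec, dotProduct_sub, sub_nonneg, dotProduct_mulVec, dotProduct_mulVec]
  rw [dotProduct_mulVec] at hD0
  exact (le_add_of_nonneg_left hD0).trans hG

end Matrix

theorem Matrix.conjTranspose_transpose_mul_mul {ι κ κ' : Type*} [Fintype ι]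
    (X : Matrix ι κ ℝ) {P : Matrix ι ι ℝ} (Y : Matrix ι κ' ℝ) (hP : P.IsHermitian) :
    (Xᵀ * P * Y)ᴴ = Yᵀ * P * X := by
  rw [conjTranspose_mul, conjTranspose_mul, hP.eq, conjTranspose_eq_transpose_of_trivial Xᵀ,
    transpose_transpose, conjTranspose_eq_transpose_of_trivial, Matrix.mul_assoc]

namespace SwitchedLQR

variable {n m M : ℕ} (S : SwitchedLQR n m M) (i : Fin M) {P P' : Matrix (Fin n) (Fin n) ℝ}

/-- For symmetric `P`, the quadratic form of this matrix at `(x, u)` is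
`xᵀQᵢx + uᵀRᵢu + (Aᵢx + Bᵢu)ᵀP(Aᵢx + Bᵢu)`; the lower-left block is written `(AᵢᵀPBᵢ)ᴴ` to fit
the shape of Mathlib's Schur complement lemmas. -/
def costBlock (P : Matrix (Fin n) (Fin n) ℝ) : Matrix (Fin n ⊕ Fin m) (Fin n ⊕ Fin m) ℝ :=
  fromBlocks (S.Q i + (S.A i)ᵀ * P * S.A i) ((S.A i)ᵀ * P * S.B i)
    ((S.A i)ᵀ * P * S.B i)ᴴ (S.R i + (S.B i)ᵀ * P * S.B i)

theorem ric_eq_schur_complement (hP : P.IsHermitian) :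
    S.Ric i P = S.Q i + (S.A i)ᵀ * P * S.A i -
      (S.A i)ᵀ * P * S.B i * (S.R i + (S.B i)ᵀ * P * S.B i)⁻¹ * ((S.A i)ᵀ * P * S.B i)ᴴ := by
  rw [conjTranspose_transpose_mul_mul _ _ hP]
  rfl

theorem costBlock_sub_costBlock (hP : P.IsHermitian) (hP' : P'.IsHermitian) :
    S.costBlock i P' - S.costBlock i P =
      (fromCols (S.A i) (S.B i))ᵀ * (P' - P) * fromCols (S.A i) (S.B i) := by
  rw [transpose_fromCols, fromRows_mul, fromRows_mul_fromCols, costBlock, costBlock,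
    conjTranspose_transpose_mul_mul _ _ hP, conjTranspose_transpose_mul_mul _ _ hP',
    sub_eq_add_neg, fromBlocks_neg, fromBlocks_add]
  simp only [Matrix.mul_sub, Matrix.sub_mul]
  congr 1 <;> abel

theorem posDef_R_add (hR : (S.R i).PosDef) (hP : 0 ≤ P) :
    (S.R i + (S.B i)ᵀ * P * S.B i).PosDef := by
  have := hP.posSemidef.conjTranspose_mul_mul_same (S.B i)
  rw [conjTranspose_eq_transpose_of_trivial] at this
  exact hR.add_posSemidef this

theorem ric_mono (hR : (S.R i).PosDef) (hP : 0 ≤ P) (hPP' : P ≤ P') :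
    S.Ric i P ≤ S.Ric i P' := by
  have hP' : 0 ≤ P' := hP.trans hPP'
  rw [ric_eq_schur_complement S i hP.posSemidef.isHermitian,
    ric_eq_schur_complement S i hP'.posSemidef.isHermitian]
  refine schur_complement₂₂_le_of_fromBlocks_le (S.posDef_R_add i hR hP)
    (S.posDef_R_add i hR hP') ?_
  change (S.costBlock i P' - S.costBlock i P).PosSemidef
  rw [costBlock_sub_costBlock S i hP.posSemidef.isHermitian hP'.posSemidef.isHermitian,
    ← conjTranspose_eq_transpose_of_trivial]
  exact hPP'.conjTranspose_mul_mul_same _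

theorem ric_zero : S.Ric i 0 = S.Q i := by
  simp [Ric]

theorem ric_nonneg (hQ : 0 ≤ S.Q i) (hR : (S.R i).PosDef) (hP : 0 ≤ P) : 0 ≤ S.Ric i P :=
  S.ric_zero i ▸ hQ |>.trans (S.ric_mono i hR le_rfl hP)

theorem le_ric_of_cond1 (hR : (S.R i).PosDef) (hP : 0 ≤ P) (hC : S.Cond1 P) :
    P ≤ S.Ric i P := by
  have hW := S.posDef_R_add i hR hP
  have := hW.isUnit.invertible
  have hblock := hC i
  rw [← conjTranspose_transpose_mul_mul (S.A i) (S.B i) hP.posSemidef.isHermitian,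
    PosDef.fromBlocks₂₂ _ _ hW] at hblock
  change (S.Ric i P - P).PosSemidef
  rw [ric_eq_schur_complement S i hP.posSemidef.isHermitian]
  rwa [sub_right_comm, add_sub_assoc, add_comm (S.Q i)]

variable {S}

theorem foldr_ric_nonneg (hQ : ∀ i, 0 ≤ S.Q i) (hR : ∀ i, (S.R i).PosDef) (hP : 0 ≤ P)
    (l : List (Fin M)) : 0 ≤ l.foldr S.Ric P := by
  induction l with
  | nil => exact hP
  | cons a l ih => exact S.ric_nonneg a (hQ a) (hR a) ih

theorem foldr_ric_mono (hQ : ∀ i, 0 ≤ S.Q i) (hR : ∀ i, (S.R i).PosDef) (hP : 0 ≤ P)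
    (hPP' : P ≤ P') (l : List (Fin M)) : l.foldr S.Ric P ≤ l.foldr S.Ric P' := by
  induction l with
  | nil => exact hPP'
  | cons a l ih => exact S.ric_mono a (hR a) (foldr_ric_nonneg hQ hR hP l) ih

theorem pseq_le_pseq_append_singleton (hQ : ∀ i, 0 ≤ S.Q i) (hR : ∀ i, (S.R i).PosDef)
    (hP : 0 ≤ P) (hC : S.Cond1 P) (l : List (Fin M)) (j : Fin M) :
    S.Pseq P l ≤ S.Pseq P (l ++ [j]) := by
  rw [Pseq, Pseq, List.foldr_append, List.foldr_cons, List.foldr_nil]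
  exact foldr_ric_mono hQ hR hP (S.le_ric_of_cond1 j (hR j) hP hC) l

end SwitchedLQR

theorem Matrix.dotProduct_mulVec_le_of_le {ι : Type*} [Fintype ι] {P P' : Matrix ι ι ℝ}
    (h : P ≤ P') (x : ι → ℝ) : x ⬝ᵥ (P *ᵥ x) ≤ x ⬝ᵥ (P' *ᵥ x) := by
  have := (le_iff.mp h).dotProduct_mulVec_nonneg x
  rwa [star_trivial, sub_mulVec, dotProduct_sub, sub_nonneg] at this

theorem stmt6_general {n m M : ℕ}
    (S : SwitchedLQR n m M)
    (hQ : ∀ i : Fin M, (S.Q i).PosDef) (hR : ∀ i : Fin M, (S.R i).PosDef)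
    (Pund : Matrix (Fin n) (Fin n) ℝ) (hPund : Pund.PosSemidef)
    (hC : S.Cond1 Pund) :
    ∀ (x : Fin n → ℝ) (l : List (Fin M)) (j : Fin M),
      x ⬝ᵥ ((S.Pseq Pund l) *ᵥ x) ≤ x ⬝ᵥ ((S.Pseq Pund (l ++ [j])) *ᵥ x) := fun x l j =>
  dotProduct_mulVec_le_of_le (SwitchedLQR.pseq_le_pseq_append_singleton
    (fun i => (hQ i).posSemidef.nonneg) hR hPund.nonneg hC l j) x

/-- Proposition 2, monotonicity under extension: under Condition 1,
for every `x`, every finite mode sequence `𝐢` and every mode `j`,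
`xᵀP_𝐢x ≤ xᵀP_{𝐢⊕j}x`, i.e. `V°_d(x,𝐢) ≤ V°_{d+1}(x,𝐢⊕j)`. -/
theorem stmt6 {n m M : ℕ} (hn : 0 < n) (hm : 0 < m) (hM : 0 < M)
    (S : SwitchedLQR n m M)
    (hQ : ∀ i : Fin M, (S.Q i).PosDef) (hR : ∀ i : Fin M, (S.R i).PosDef)
    (Pund : Matrix (Fin n) (Fin n) ℝ) (hPund : Pund.PosSemidef)
    (hC : S.Cond1 Pund) :
    ∀ (x : Fin n → ℝ) (l : List (Fin M)) (j : Fin M),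
      x ⬝ᵥ ((S.Pseq Pund l) *ᵥ x) ≤ x ⬝ᵥ ((S.Pseq Pund (l ++ [j])) *ᵥ x) :=
  stmt6_general S hQ hR Pund hPund hC
end

section
/- (Proposition 3, second part.) Under Condition 1, for every x ∈ ℝⁿ, every d ∈ ℕ, and every pair of infinite input sequences u = (u_0,u_1,…) in ℝᵐ and i = (i_0,i_1,…) in 𝕄 such that φ(k,x,u,i) → 0 as k → ∞, the inequality (V*_d(x) : [0,∞]) ≤ J(x,u,i) holds, where the infinite-horizon cost J is valued in the extended nonnegative reals. -/
open Matrix Filter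
open scoped ENNReal

/-!
Completing the square shows that `xᵀ𝓡ᵢ(P)x` is the least one-step cost `ℓ(x,u,i) + yᵀPy`,
`y = Aᵢx + Bᵢu`, over `u`; by induction `xᵀP_𝐢x ≤ J_d(x,u,i)` whenever `𝐢 = (i₀,…,i_{d-1})`.
Condition 1 says that `xᵀP̲x` decreases along the system by at most the stage cost, so
telescoping from `d` on and letting `φ(k) → 0` bounds the terminal cost `φ(d)ᵀP̲φ(d)` of `J_d`
by the tail `∑_{k ≥ d} ℓ_k` of the infinite-horizon cost.
-/

theorem Matrix.IsSymm.dotProduct_mulVec_comm {ι : Type*} [Fintype ι] {P : Matrix ι ι ℝ}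
    (hP : P.IsSymm) (v w : ι → ℝ) : v ⬝ᵥ (P *ᵥ w) = w ⬝ᵥ (P *ᵥ v) := by
  simpa only [hP.eq] using (dotProduct_transpose_mulVec P w v).symm

theorem ENNReal.ofReal_le_tsum_of_le_add_succ {V ℓ : ℕ → ℝ}
    (hstep : ∀ k, V k ≤ ℓ k + V (k + 1)) (hV : Tendsto V atTop (nhds 0)) :
    ENNReal.ofReal (V 0) ≤ ∑' k, ENNReal.ofReal (ℓ k) := by
  have htelescope : ∀ N, ENNReal.ofReal (V 0) ≤
      ∑ k ∈ Finset.range N, ENNReal.ofReal (ℓ k) + ENNReal.ofReal (V N) := by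
    intro N
    induction N with
    | zero => simp
    | succ N ih =>
      calc ENNReal.ofReal (V 0)
          ≤ ∑ k ∈ Finset.range N, ENNReal.ofReal (ℓ k) + ENNReal.ofReal (V N) := ih
        _ ≤ ∑ k ∈ Finset.range N, ENNReal.ofReal (ℓ k) +
              (ENNReal.ofReal (ℓ N) + ENNReal.ofReal (V (N + 1))) := by
          gcongr
          exact (ENNReal.ofReal_le_ofReal (hstep N)).trans ENNReal.ofReal_add_le
        _ = _ := by rw [Finset.sum_range_succ, add_assoc]
  have hlim := (ENNReal.tendsto_nat_tsum fun k => ENNReal.ofReal (ℓ k)).add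
    (ENNReal.tendsto_ofReal hV)
  simpa using ge_of_tendsto' hlim htelescope

namespace SwitchedLQR

variable {n m M : ℕ} (S : SwitchedLQR n m M)

theorem ell_nonneg {i : Fin M} (hQ : (S.Q i).PosSemidef) (hR : (S.R i).PosSemidef)
    (x : Fin n → ℝ) (u : Fin m → ℝ) : 0 ≤ S.ell x u i :=
  add_nonneg (hQ.dotProduct_mulVec_nonneg x) (hR.dotProduct_mulVec_nonneg u)

section Riccati

variable (i : Fin M) {P : Matrix (Fin n) (Fin n) ℝ}

/-- Completing the square in `u`: `v` is the deviation of `u` from the optimal feedback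
`-G⁻¹BᵢᵀPAᵢx`. -/
theorem quadForm_Ric_add_sq (hP : P.IsSymm) (hR : (S.R i).IsSymm)
    (hG : IsUnit (S.R i + (S.B i)ᵀ * P * S.B i).det) (x : Fin n → ℝ) (u : Fin m → ℝ) :
    let G := S.R i + (S.B i)ᵀ * P * S.B i
    let v := u + G⁻¹ *ᵥ (((S.B i)ᵀ * P * S.A i) *ᵥ x)
    x ⬝ᵥ (S.Ric i P *ᵥ x) + v ⬝ᵥ (G *ᵥ v) =
      S.ell x u i + (S.A i *ᵥ x + S.B i *ᵥ u) ⬝ᵥ (P *ᵥ (S.A i *ᵥ x + S.B i *ᵥ u)) := by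
  intro G v
  set A := S.A i
  set B := S.B i
  have hGsymm : G.IsSymm := hR.add (by simp [IsSymm, Matrix.transpose_mul, hP.eq, Matrix.mul_assoc])
  set a := A *ᵥ x
  set b := B *ᵥ u
  set w := Bᵀ *ᵥ (P *ᵥ a)
  set t := G⁻¹ *ᵥ w
  have hw : (Bᵀ * P * A) *ᵥ x = w := by simp only [← Matrix.mulVec_mulVec, a, w]
  have hRic : S.Ric i P *ᵥ x = S.Q i *ᵥ x + Aᵀ *ᵥ (P *ᵥ a) - Aᵀ *ᵥ (P *ᵥ (B *ᵥ t)) := by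
    simp only [Ric, Matrix.add_mulVec, Matrix.sub_mulVec, ← Matrix.mulVec_mulVec, a, t, w, G, A, B]
  have hGt : G *ᵥ t = w := by
    rw [Matrix.mulVec_mulVec, Matrix.mul_nonsing_inv _ hG, Matrix.one_mulVec]
  have htGu : t ⬝ᵥ (G *ᵥ u) = u ⬝ᵥ w := by
    rw [hGsymm.dotProduct_mulVec_comm, hGt]
  have huGu : u ⬝ᵥ (G *ᵥ u) = u ⬝ᵥ (S.R i *ᵥ u) + b ⬝ᵥ (P *ᵥ b) := by
    rw [Matrix.add_mulVec, dotProduct_add, ← Matrix.mulVec_mulVec, ← Matrix.mulVec_mulVec,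
      dotProduct_transpose_mulVec, dotProduct_comm (P *ᵥ _)]
  have hv : v = u + t := by
    show u + G⁻¹ *ᵥ ((Bᵀ * P * A) *ᵥ x) = u + t
    rw [hw]
  have hxa : x ⬝ᵥ (Aᵀ *ᵥ (P *ᵥ a)) = a ⬝ᵥ (P *ᵥ a) := by
    rw [dotProduct_transpose_mulVec, dotProduct_comm]
  have hxt : x ⬝ᵥ (Aᵀ *ᵥ (P *ᵥ (B *ᵥ t))) = t ⬝ᵥ w := by
    rw [dotProduct_transpose_mulVec, dotProduct_comm, hP.dotProduct_mulVec_comm,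
      dotProduct_comm, ← dotProduct_transpose_mulVec]
  have hba : b ⬝ᵥ (P *ᵥ a) = u ⬝ᵥ w := by
    rw [dotProduct_comm, ← dotProduct_transpose_mulVec]
  have hab : a ⬝ᵥ (P *ᵥ b) = u ⬝ᵥ w := by rw [hP.dotProduct_mulVec_comm, hba]
  rw [hv, hRic]
  simp only [ell, dotProduct_add, add_dotProduct, dotProduct_sub, Matrix.mulVec_add, hGt, htGu,
    huGu, hxa, hxt, hba, hab]
  ring

theorem isSymm_Ric (hP : P.IsSymm) (hQ : (S.Q i).IsSymm) (hR : (S.R i).IsSymm) :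
    (S.Ric i P).IsSymm := by
  simp only [IsSymm, Ric, Matrix.transpose_add, Matrix.transpose_sub, Matrix.transpose_mul,
    Matrix.transpose_nonsing_inv, Matrix.transpose_transpose, hP.eq, hQ.eq, hR.eq, Matrix.mul_assoc]

theorem posDef_R_add_transpose_mul_mul (hP : P.PosSemidef) (hR : (S.R i).PosDef) :
    (S.R i + (S.B i)ᵀ * P * S.B i).PosDef := by
  simpa only [conjTranspose_eq_transpose_of_trivial] using
    hR.add_posSemidef (hP.conjTranspose_mul_mul_same (S.B i))

theorem quadForm_Ric_le (hP : P.PosSemidef) (hR : (S.R i).PosDef) (x : Fin n → ℝ)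
    (u : Fin m → ℝ) :
    x ⬝ᵥ (S.Ric i P *ᵥ x) ≤
      S.ell x u i + (S.A i *ᵥ x + S.B i *ᵥ u) ⬝ᵥ (P *ᵥ (S.A i *ᵥ x + S.B i *ᵥ u)) := by
  have hG := S.posDef_R_add_transpose_mul_mul i hP hR
  rw [← S.quadForm_Ric_add_sq i (isHermitian_iff_isSymm.mp hP.1) (isHermitian_iff_isSymm.mp hR.1)
    (isUnit_iff_ne_zero.mpr hG.det_pos.ne')]
  simpa using hG.posSemidef.dotProduct_mulVec_nonneg (u + _)

theorem posSemidef_Ric (hP : P.PosSemidef) (hQ : (S.Q i).PosSemidef) (hR : (S.R i).PosDef) :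
    (S.Ric i P).PosSemidef := by
  have hG := S.posDef_R_add_transpose_mul_mul i hP hR
  refine .of_dotProduct_mulVec_nonneg (isHermitian_iff_isSymm.mpr <| S.isSymm_Ric i
    (isHermitian_iff_isSymm.mp hP.1) (isHermitian_iff_isSymm.mp hQ.1)
    (isHermitian_iff_isSymm.mp hR.1)) fun x => ?_
  -- the optimal feedback makes the completed square vanish
  have hsq := S.quadForm_Ric_add_sq i (isHermitian_iff_isSymm.mp hP.1)
    (isHermitian_iff_isSymm.mp hR.1) (isUnit_iff_ne_zero.mpr hG.det_pos.ne') x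
    (-((S.R i + (S.B i)ᵀ * P * S.B i)⁻¹ *ᵥ (((S.B i)ᵀ * P * S.A i) *ᵥ x)))
  simp only [neg_add_cancel, Matrix.mulVec_zero, dotProduct_zero, add_zero] at hsq
  rw [star_trivial, hsq]
  exact add_nonneg (S.ell_nonneg hQ hR.posSemidef x _) (hP.dotProduct_mulVec_nonneg _)

end Riccati

theorem posSemidef_Pseq (hQ : ∀ i, (S.Q i).PosSemidef) (hR : ∀ i, (S.R i).PosDef)
    {Pund : Matrix (Fin n) (Fin n) ℝ} (hPund : Pund.PosSemidef) (l : List (Fin M)) :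
    (S.Pseq Pund l).PosSemidef := by
  induction l with
  | nil => exact hPund
  | cons i l ih => exact S.posSemidef_Ric i ih (hQ i) (hR i)

theorem phi_succ_eq_shift (x : Fin n → ℝ) (u : ℕ → Fin m → ℝ) (is : ℕ → Fin M) (k : ℕ) :
    S.phi x u is (k + 1) =
      S.phi (S.A (is 0) *ᵥ x + S.B (is 0) *ᵥ u 0) (fun j => u (j + 1)) (fun j => is (j + 1)) k := by
  induction k with
  | zero => rfl
  | succ k ih => rw [phi, ih]; rfl

theorem Jd_succ (Pund : Matrix (Fin n) (Fin n) ℝ) (d : ℕ) (x : Fin n → ℝ) (u : ℕ → Fin m → ℝ)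
    (is : ℕ → Fin M) :
    S.Jd Pund (d + 1) x u is = S.ell x (u 0) (is 0) +
      S.Jd Pund d (S.A (is 0) *ᵥ x + S.B (is 0) *ᵥ u 0) (fun j => u (j + 1))
        (fun j => is (j + 1)) := by
  simp only [Jd, Finset.sum_range_succ', phi_succ_eq_shift]
  rw [phi]
  ring

theorem quadForm_Pseq_le_Jd (hQ : ∀ i, (S.Q i).PosSemidef) (hR : ∀ i, (S.R i).PosDef)
    {Pund : Matrix (Fin n) (Fin n) ℝ} (hPund : Pund.PosSemidef) (d : ℕ) (x : Fin n → ℝ)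
    (u : ℕ → Fin m → ℝ) (is : ℕ → Fin M) :
    x ⬝ᵥ (S.Pseq Pund ((List.range d).map is) *ᵥ x) ≤ S.Jd Pund d x u is := by
  induction d generalizing x u is with
  | zero => simp [Pseq, Jd, phi]
  | succ d ih =>
    rw [List.range_succ_eq_map, List.map_cons, List.map_map, Jd_succ]
    calc x ⬝ᵥ (S.Ric (is 0) (S.Pseq Pund ((List.range d).map (is ∘ Nat.succ))) *ᵥ x)
        ≤ _ := S.quadForm_Ric_le (is 0) (S.posSemidef_Pseq hQ hR hPund _) (hR (is 0)) x (u 0)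
      _ ≤ _ := by gcongr; exact ih _ _ _

theorem Vd_le_quadForm_Pseq (hQ : ∀ i, (S.Q i).PosSemidef) (hR : ∀ i, (S.R i).PosDef)
    {Pund : Matrix (Fin n) (Fin n) ℝ} (hPund : Pund.PosSemidef) (x : Fin n → ℝ)
    {l : List (Fin M)} : S.Vd Pund l.length x ≤ x ⬝ᵥ (S.Pseq Pund l *ᵥ x) := by
  refine csInf_le ⟨0, ?_⟩ ⟨l, rfl, rfl⟩
  rintro _ ⟨l', -, rfl⟩
  exact (S.posSemidef_Pseq hQ hR hPund l').dotProduct_mulVec_nonneg x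

theorem quadForm_le_ell_add_of_cond1 {Pund : Matrix (Fin n) (Fin n) ℝ} (hC : S.Cond1 Pund)
    (i : Fin M) (x : Fin n → ℝ) (u : Fin m → ℝ) :
    x ⬝ᵥ (Pund *ᵥ x) ≤
      S.ell x u i + (S.A i *ᵥ x + S.B i *ᵥ u) ⬝ᵥ (Pund *ᵥ (S.A i *ᵥ x + S.B i *ᵥ u)) := by
  have h := (hC i).dotProduct_mulVec_nonneg (Sum.elim x u)
  rw [star_trivial, fromBlocks_mulVec, sumElim_dotProduct_sumElim] at h
  simp only [ell, Matrix.add_mulVec, Matrix.sub_mulVec, ← Matrix.mulVec_mulVec, dotProduct_add,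
    dotProduct_sub, Matrix.mulVec_add, add_dotProduct, Sum.elim_comp_inl, Sum.elim_comp_inr,
    Matrix.dotProduct_mulVec, Matrix.vecMul_transpose, Matrix.add_vecMul] at h ⊢
  linarith

theorem ofReal_quadForm_phi_le_tsum {Pund : Matrix (Fin n) (Fin n) ℝ} (hC : S.Cond1 Pund)
    {x : Fin n → ℝ} {u : ℕ → Fin m → ℝ} {is : ℕ → Fin M}
    (hφ : Tendsto (S.phi x u is) atTop (nhds 0)) (d : ℕ) :
    ENNReal.ofReal (S.phi x u is d ⬝ᵥ (Pund *ᵥ S.phi x u is d)) ≤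
      ∑' k, ENNReal.ofReal (S.ell (S.phi x u is (k + d)) (u (k + d)) (is (k + d))) := by
  have hq : Continuous fun v : Fin n → ℝ => v ⬝ᵥ (Pund *ᵥ v) := by
    simp only [dotProduct, Matrix.mulVec]
    fun_prop
  have h := ENNReal.ofReal_le_tsum_of_le_add_succ
    (V := fun k => S.phi x u is (k + d) ⬝ᵥ (Pund *ᵥ S.phi x u is (k + d)))
    (ℓ := fun k => S.ell (S.phi x u is (k + d)) (u (k + d)) (is (k + d)))
    (fun k => by
      rw [add_right_comm]
      exact S.quadForm_le_ell_add_of_cond1 hC _ _ _)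
    (by simpa [Function.comp_def] using (hq.tendsto 0).comp ((tendsto_add_atTop_iff_nat d).mpr hφ))
  rwa [zero_add] at h

end SwitchedLQR

theorem stmt8_general {n m M : ℕ}
    (S : SwitchedLQR n m M)
    (hQ : ∀ i : Fin M, (S.Q i).PosDef) (hR : ∀ i : Fin M, (S.R i).PosDef)
    (Pund : Matrix (Fin n) (Fin n) ℝ) (hPund : Pund.PosSemidef)
    (hC : S.Cond1 Pund) :
    ∀ (x : Fin n → ℝ) (d : ℕ) (u : ℕ → Fin m → ℝ) (is : ℕ → Fin M),
      Tendsto (fun k => S.phi x u is k) atTop (nhds 0) →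
      ENNReal.ofReal (S.Vd Pund d x) ≤ S.Jinf x u is := by
  intro x d u is hφ
  have hQ' i := (hQ i).posSemidef
  have hVd : S.Vd Pund d x ≤ S.Jd Pund d x u is := by
    simpa using (S.Vd_le_quadForm_Pseq hQ' hR hPund x).trans
      (S.quadForm_Pseq_le_Jd hQ' hR hPund d x u is)
  calc ENNReal.ofReal (S.Vd Pund d x)
      ≤ ∑ k ∈ Finset.range d, ENNReal.ofReal (S.ell (S.phi x u is k) (u k) (is k)) +
          ENNReal.ofReal (S.phi x u is d ⬝ᵥ (Pund *ᵥ S.phi x u is d)) := by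
        rw [← ENNReal.ofReal_sum_of_nonneg fun k _ => S.ell_nonneg (hQ' _) (hR _).posSemidef _ _]
        exact (ENNReal.ofReal_le_ofReal hVd).trans ENNReal.ofReal_add_le
    _ ≤ ∑ k ∈ Finset.range d, ENNReal.ofReal (S.ell (S.phi x u is k) (u k) (is k)) +
          ∑' k, ENNReal.ofReal (S.ell (S.phi x u is (k + d)) (u (k + d)) (is (k + d))) := by
        gcongr
        exact S.ofReal_quadForm_phi_le_tsum hC hφ d
    _ = S.Jinf x u is := ENNReal.summable.sum_add_tsum_nat_add'

/-- Proposition 3, second part: under Condition 1, for every `x`,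
`d`, and infinite input sequences `(u,i)` whose solution converges to `0`,
`V*_d(x) ≤ J(x,u,i)` in `[0,∞]`. -/
theorem stmt8 {n m M : ℕ} (hn : 0 < n) (hm : 0 < m) (hM : 0 < M)
    (S : SwitchedLQR n m M)
    (hQ : ∀ i : Fin M, (S.Q i).PosDef) (hR : ∀ i : Fin M, (S.R i).PosDef)
    (Pund : Matrix (Fin n) (Fin n) ℝ) (hPund : Pund.PosSemidef)
    (hC : S.Cond1 Pund) :
    ∀ (x : Fin n → ℝ) (d : ℕ) (u : ℕ → Fin m → ℝ) (is : ℕ → Fin M),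
      Tendsto (fun k => S.phi x u is k) atTop (nhds 0) →
      ENNReal.ofReal (S.Vd Pund d x) ≤ S.Jinf x u is :=
  stmt8_general S hQ hR Pund hPund hC
end
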